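/- In type A_2 (Cartan matrix a_{12} = a_{21} = -1): the Coxeter automorphism T = T_2 T_1 of Q(u_1, u_2) has order 5 on the set of cluster variables; explicitly the orbit of u_1 under T consists of exactly the five elements u_1, u_2, (u_2+1)/u_1, (u_1+u_2+1)/(u_1 u_2), (u_1+1)/u_2, and T^5(u_1) = u_1. -/

import Mathlib

/-!
Arrange the five cluster variables around a pentagon, indexed by `ZMod 5`:
`x, (x + y + 1) / (x * y), y, (x + 1) / y, (y + 1) / x`. The mutations `T₁` and `T₂` act on
them as the reflections `i ↦ -1 - i` and `i ↦ -i`, so `T = T₂ ∘ T₁` is the rotation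
`i ↦ i + 1`: the `T`-orbit of `x` runs once around the pentagon and `T⁵ x = x`.
-/

open MvPolynomial

section Orbit

variable {G α : Type*} [Group G] [MulAction G α] {n : ℕ} {g : G} {c : ZMod n → α}

theorem zpow_smul_eq_of_smul_eq_add_one (h : ∀ i, g • c i = c (i + 1)) (m : ℤ) :
    (g ^ m) • c 0 = c m := by
  induction m using Int.induction_on with
  | zero => simp
  | succ k ih =>
    rw [add_comm, zpow_one_add, mul_smul, ih, h]
    push_cast; ring_nf
  | pred k ih =>
    rw [sub_eq_neg_add, zpow_add, zpow_neg_one, mul_smul, ih, inv_smul_eq_iff, h]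
    push_cast; ring_nf

theorem range_zpow_smul_eq_range_of_smul_eq_add_one (h : ∀ i, g • c i = c (i + 1)) :
    Set.range (fun m : ℤ => (g ^ m) • c 0) = Set.range c := by
  simp_rw [zpow_smul_eq_of_smul_eq_add_one h]
  exact ZMod.intCast_surjective.range_comp c

end Orbit

theorem MvPolynomial.X_add_C_ne_zero {σ R : Type*} [CommSemiring R] [Nontrivial R] (j : σ)
    (r : R) : X j + C r ≠ 0 := by
  classical
  intro h
  simpa [coeff_C, (Finsupp.single_ne_zero.2 one_ne_zero).symm] using
    congrArg (coeff (Finsupp.single j 1)) h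

section A2

variable {K : Type*} [Field K]

def a2ClusterVariable (x y : K) : ZMod 5 → K :=
  ![x, (x + y + 1) / (x * y), y, (x + 1) / y, (y + 1) / x]

variable {x y : K}

theorem range_a2ClusterVariable :
    Set.range (a2ClusterVariable x y) =
      {x, (x + y + 1) / (x * y), y, (x + 1) / y, (y + 1) / x} := by
  change Set.range ![x, (x + y + 1) / (x * y), y, (x + 1) / y, (y + 1) / x] = _
  simp only [Matrix.range_cons, Matrix.range_empty, Set.union_empty, Set.singleton_union]

theorem apply_a2ClusterVariable_of_mutation₁ (hx : x ≠ 0) (hy : y ≠ 0) (hy1 : y + 1 ≠ 0)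
    {σ : K ≃+* K} (hσx : σ x = (y + 1) / x) (hσy : σ y = y) (i : ZMod 5) :
    σ (a2ClusterVariable x y i) = a2ClusterVariable x y (-1 - i) := by
  fin_cases i
  · show σ x = (y + 1) / x
    exact hσx
  · show σ ((x + y + 1) / (x * y)) = (x + 1) / y
    simp only [map_div₀, map_add, map_mul, map_one, hσx, hσy]
    field_simp
    ring
  · show σ y = y
    exact hσy
  · show σ ((x + 1) / y) = (x + y + 1) / (x * y)
    simp only [map_div₀, map_add, map_one, hσx, hσy]
    field_simp
    ring
  · show σ ((y + 1) / x) = x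
    simp only [map_div₀, map_add, map_one, hσx, hσy]
    field_simp

theorem apply_a2ClusterVariable_of_mutation₂ (hx : x ≠ 0) (hy : y ≠ 0) (hx1 : x + 1 ≠ 0)
    {σ : K ≃+* K} (hσx : σ x = x) (hσy : σ y = (x + 1) / y) (i : ZMod 5) :
    σ (a2ClusterVariable x y i) = a2ClusterVariable x y (-i) := by
  fin_cases i
  · show σ x = x
    exact hσx
  · show σ ((x + y + 1) / (x * y)) = (y + 1) / x
    simp only [map_div₀, map_add, map_mul, map_one, hσx, hσy]
    field_simp
    ring
  · show σ y = (x + 1) / y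
    exact hσy
  · show σ ((x + 1) / y) = y
    simp only [map_div₀, map_add, map_one, hσx, hσy]
    field_simp
  · show σ ((y + 1) / x) = (x + y + 1) / (x * y)
    simp only [map_div₀, map_add, map_one, hσx, hσy]
    field_simp
    ring

theorem coxeter_smul_a2ClusterVariable (hx : x ≠ 0) (hy : y ≠ 0) (hx1 : x + 1 ≠ 0)
    (hy1 : y + 1 ≠ 0) {σ₁ σ₂ : RingAut K} (hσ₁x : σ₁ x = (y + 1) / x) (hσ₁y : σ₁ y = y)
    (hσ₂x : σ₂ x = x) (hσ₂y : σ₂ y = (x + 1) / y) (i : ZMod 5) :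
    (σ₂ * σ₁) • a2ClusterVariable x y i = a2ClusterVariable x y (i + 1) := by
  rw [RingAut.smul_def, RingAut.mul_apply,
    apply_a2ClusterVariable_of_mutation₁ hx hy hy1 hσ₁x hσ₁y,
    apply_a2ClusterVariable_of_mutation₂ hx hy hx1 hσ₂x hσ₂y]
  ring_nf

end A2

/-- in type `A₂` the Coxeter automorphism `T = T₂ ∘ T₁` of `ℚ(u₁,u₂)`
has order 5 on cluster variables: the orbit of `u₁` under `T` consists of exactly the
five cluster variables `u₁, u₂, (u₂+1)/u₁, (u₁+u₂+1)/(u₁u₂), (u₁+1)/u₂`, and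
`T⁵(u₁) = u₁`. -/
theorem A2_coxeter_orbit
    (u : Fin 2 → FractionRing (MvPolynomial (Fin 2) ℚ))
    (hu : ∀ j, u j = algebraMap (MvPolynomial (Fin 2) ℚ) _ (X j))
    (T1 T2 : RingAut (FractionRing (MvPolynomial (Fin 2) ℚ)))
    (hT1 : T1 (u 0) = (u 1 + 1) / u 0) (hT1' : T1 (u 1) = u 1)
    (hT2 : T2 (u 1) = (u 0 + 1) / u 1) (hT2' : T2 (u 0) = u 0)
    (T : RingAut (FractionRing (MvPolynomial (Fin 2) ℚ)))
    (hT : ∀ x, T x = T2 (T1 x)) :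
    (T ^ (5 : ℤ)) (u 0) = u 0 ∧
      Set.range (fun m : ℤ => (T ^ m) (u 0)) =
        {u 0, u 1, (u 1 + 1) / u 0, (u 0 + u 1 + 1) / (u 0 * u 1), (u 0 + 1) / u 1} := by
  have hu_add_ne_zero (j : Fin 2) (r : ℚ) :
      u j + algebraMap (MvPolynomial (Fin 2) ℚ) _ (C r) ≠ 0 := by
    rw [hu, ← map_add, Ne, IsFractionRing.to_map_eq_zero_iff]
    exact X_add_C_ne_zero j r
  have hx : u 0 ≠ 0 := by simpa using hu_add_ne_zero 0 0
  have hy : u 1 ≠ 0 := by simpa using hu_add_ne_zero 1 0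
  have hx1 : u 0 + 1 ≠ 0 := by simpa using hu_add_ne_zero 0 1
  have hy1 : u 1 + 1 ≠ 0 := by simpa using hu_add_ne_zero 1 1
  have hT_rotates (i : ZMod 5) : T • a2ClusterVariable (u 0) (u 1) i =
      a2ClusterVariable (u 0) (u 1) (i + 1) := by
    rw [show T = T2 * T1 from RingEquiv.ext hT]
    exact coxeter_smul_a2ClusterVariable hx hy hx1 hy1 hT1 hT1' hT2' hT2 i
  refine ⟨zpow_smul_eq_of_smul_eq_add_one hT_rotates 5, ?_⟩
  calc Set.range (fun m : ℤ => (T ^ m) (u 0))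
      = Set.range (a2ClusterVariable (u 0) (u 1)) :=
        range_zpow_smul_eq_range_of_smul_eq_add_one hT_rotates
    _ = _ := by
      rw [range_a2ClusterVariable, Set.pair_comm ((u 0 + 1) / u 1),
        Set.insert_comm ((u 0 + u 1 + 1) / (u 0 * u 1)) (u 1),
        Set.insert_comm ((u 0 + u 1 + 1) / (u 0 * u 1)) ((u 1 + 1) / u 0)]
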